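/- arXiv:1912.07402 — 4 statements merged into one kernel-verified Lean document; each statement's English description precedes it below -/
import Mathlib

section
/- Assume the L¹ spectral inequality on E holds with constant N ≥ 1. Then for every ε ∈ (0,1) there exists N' > 0 (depending only on N, ε and μ(M)) such that for all 0 ≤ s < t and all f ∈ L²(μ): ‖S_t f‖_{L²(μ)} ≤ N' e^{N'/(t−s)} ( ∫_E |S_t f| dμ )^{1−ε} ‖S_s f‖_{L²(μ)}^{ε}. -/
/-!
Split `S t f` at frequency `Λ`. The low-frequency part obeys the spectral inequality, and the
`L¹(E)` norm of `S t f` controls it up to the `L¹`, hence `L²`, norm of the high-frequency part,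
which the heat semigroup damps by `e^{-(t-s)Λ²}` relative to `S s f`. This gives
`‖S t f‖ ≤ N e^{NΛ} ∫_E |S t f| + C e^{NΛ - (t-s)Λ²} ‖S s f‖` for every `Λ ≥ 0`; absorbing `NΛ`
by AM-GM and choosing `(t-s)Λ² = log (‖S s f‖ / ∫_E |S t f|)` balances the two terms. When
`∫_E |S t f| ≥ ‖S s f‖`, the contraction `‖S t f‖ ≤ ‖S s f‖` already suffices.
-/

open MeasureTheory Real Filter Topology

namespace HilbertBasis

variable {ι 𝕜 H : Type*} [RCLike 𝕜] [NormedAddCommGroup H] [InnerProductSpace 𝕜 H]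
  (b : HilbertBasis ι 𝕜 H)

theorem repr_apply_of_hasSum {c : ι → 𝕜} {x : H} (h : HasSum (fun k => c k • b k) x) (i : ι) :
    b.repr x i = c i := by
  classical
  have hi := h.mapL (innerSL 𝕜 (b i))
  simp only [innerSL_apply_apply, inner_smul_right, orthonormal_iff_ite.mp b.orthonormal,
    mul_ite, mul_one, mul_zero, eq_comm (a := i)] at hi
  rw [b.repr_apply_apply]
  simpa using hi.unique (hasSum_single i fun k hk => if_neg hk)

theorem norm_le_norm_of_norm_repr_le {x y : H} (h : ∀ i, ‖b.repr x i‖ ≤ ‖b.repr y i‖) :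
    ‖x‖ ≤ ‖y‖ := by
  simpa only [LinearIsometryEquiv.norm_map] using lp.norm_mono two_ne_zero h

end HilbertBasis

section HeatSeries

variable {ι H : Type*} [NormedAddCommGroup H] [InnerProductSpace ℝ H] (b : HilbertBasis ι ℝ H)
  {lam : ι → ℝ} {c : ι → ℝ} {s t : ℝ} {xs xt : H}
  (hs : HasSum (fun k => (exp (-(s * lam k ^ 2)) * c k) • b k) xs)
  (ht : HasSum (fun k => (exp (-(t * lam k ^ 2)) * c k) • b k) xt)
include hs ht

theorem norm_le_norm_of_hasSum_heat (hst : s ≤ t) : ‖xt‖ ≤ ‖xs‖ := by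
  refine b.norm_le_norm_of_norm_repr_le fun k => ?_
  rw [b.repr_apply_of_hasSum hs, b.repr_apply_of_hasSum ht, norm_mul, norm_mul]
  gcongr
  simp only [norm_eq_abs, abs_exp, exp_le_exp]
  nlinarith [sq_nonneg (lam k)]

theorem norm_sub_le_of_hasSum_heat (hst : s ≤ t) {Λ : ℝ} (hΛ : 0 ≤ Λ) {P : H}
    (hP : HasSum (fun k => (if lam k ≤ Λ then b.repr xt k else 0) • b k) P) :
    ‖xt - P‖ ≤ exp (-((t - s) * Λ ^ 2)) * ‖xs‖ := by
  rw [← abs_of_pos (exp_pos _), ← Real.norm_eq_abs, ← norm_smul]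
  refine b.norm_le_norm_of_norm_repr_le fun k => ?_
  simp only [map_sub, map_smul, lp.coeFn_sub, lp.coeFn_smul, Pi.sub_apply, Pi.smul_apply,
    b.repr_apply_of_hasSum hP, b.repr_apply_of_hasSum hs, b.repr_apply_of_hasSum ht, smul_eq_mul]
  split_ifs with hk
  · simp only [sub_self, norm_zero]
    positivity
  · rw [sub_zero, ← mul_assoc, ← exp_add, norm_mul, norm_mul]
    gcongr
    have hΛk : Λ ^ 2 ≤ lam k ^ 2 := pow_le_pow_left₀ hΛ (not_le.mp hk).le 2
    simp only [norm_eq_abs, abs_exp, exp_le_exp]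
    nlinarith [mul_le_mul_of_nonneg_left hΛk (sub_nonneg.mpr hst)]

end HeatSeries

namespace MeasureTheory.Lp

variable {M : Type*} [MeasurableSpace M] {μ : Measure M} [IsFiniteMeasure μ]

theorem setIntegral_abs_le (E : Set M) (g : Lp ℝ 2 μ) :
    ∫ x in E, |g x| ∂μ ≤ μ.real Set.univ ^ (1 / 2 : ℝ) * ‖g‖ := by
  have hg1 : eLpNorm g 1 μ ≤ eLpNorm g 2 μ * μ Set.univ ^ (1 / 2 : ℝ) := by
    have := eLpNorm_le_eLpNorm_mul_rpow_measure_univ (p := 1) (q := 2) (by norm_num)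
      (Lp.aestronglyMeasurable g) (μ := μ)
    norm_num at this ⊢
    exact this
  calc ∫ x in E, |g x| ∂μ ≤ ∫ x, |g x| ∂μ :=
        setIntegral_le_integral ((Lp.memLp g).integrable one_le_two).abs
          (.of_forall fun x => abs_nonneg _)
    _ = (eLpNorm g 1 μ).toReal := by
        simp only [← Real.norm_eq_abs, integral_norm_eq_lintegral_enorm (Lp.aestronglyMeasurable g),
          eLpNorm_one_eq_lintegral_enorm]
    _ ≤ (eLpNorm g 2 μ * μ Set.univ ^ (1 / 2 : ℝ)).toReal :=
        ENNReal.toReal_mono (ENNReal.mul_ne_top (Lp.eLpNorm_ne_top g)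
          (ENNReal.rpow_ne_top_of_nonneg (by norm_num) (measure_ne_top μ _))) hg1
    _ = μ.real Set.univ ^ (1 / 2 : ℝ) * ‖g‖ := by
        rw [ENNReal.toReal_mul, ← Lp.norm_def, ← ENNReal.toReal_rpow, mul_comm, measureReal_def]

theorem norm_le_of_norm_le_setIntegral (E : Set M) {C : ℝ} (hC : 0 ≤ C) {g P : Lp ℝ 2 μ}
    (hP : ‖P‖ ≤ C * ∫ x in E, |P x| ∂μ) :
    ‖g‖ ≤ C * ∫ x in E, |g x| ∂μ + (1 + C * μ.real Set.univ ^ (1 / 2 : ℝ)) * ‖g - P‖ := by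
  have hint (h : Lp ℝ 2 μ) : Integrable (fun x => |h x|) (μ.restrict E) :=
    ((Lp.memLp h).integrable one_le_two).abs.restrict
  have hPg : ∫ x in E, |P x| ∂μ ≤ ∫ x in E, |g x| ∂μ + ∫ x in E, |(g - P) x| ∂μ := by
    rw [← integral_add (hint g) (hint (g - P))]
    refine integral_mono_ae (hint P) ((hint g).add (hint (g - P))) ?_
    filter_upwards [ae_restrict_of_ae (Lp.coeFn_sub g P)] with x hx
    rw [hx, Pi.sub_apply]
    linarith [abs_sub_abs_le_abs_sub (P x) (g x), abs_sub_comm (P x) (g x)]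
  calc ‖g‖ ≤ ‖P‖ + ‖g - P‖ := norm_le_norm_add_norm_sub' g P
    _ ≤ C * (∫ x in E, |g x| ∂μ + μ.real Set.univ ^ (1 / 2 : ℝ) * ‖g - P‖) + ‖g - P‖ := by
        gcongr
        exact hP.trans (by gcongr; exact hPg.trans (by gcongr; exact setIntegral_abs_le E _))
    _ = _ := by ring

end MeasureTheory.Lp

theorem le_two_mul_mul_rpow_mul_rpow {X Y Z K ε : ℝ} (hε0 : 0 < ε) (hε1 : ε < 1) (hY : 0 ≤ Y)
    (hZ : 0 ≤ Z) (hK : 1 ≤ K) (hXZ : X ≤ Z)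
    (h : ∀ u, 0 ≤ u → X ≤ K * (exp (ε * u) * Y + exp (-((1 - ε) * u)) * Z)) :
    X ≤ 2 * K * (Y ^ (1 - ε) * Z ^ ε) := by
  rcases le_or_gt Z Y with hZY | hYZ
  · calc X ≤ Z ^ (1 - ε) * Z ^ ε := by rwa [← rpow_add' hZ (by simp), sub_add_cancel, rpow_one]
      _ ≤ Y ^ (1 - ε) * Z ^ ε := by gcongr
      _ ≤ 2 * K * (Y ^ (1 - ε) * Z ^ ε) := le_mul_of_one_le_left (by positivity) (by linarith)
  have hZ0 : 0 < Z := hY.trans_lt hYZ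
  rcases hY.eq_or_lt with rfl | hY0
  · -- letting `u → ∞` in the hypothesis forces `X ≤ 0`
    rw [zero_rpow (by linarith), zero_mul, mul_zero]
    have hlim : Tendsto (fun u => K * (exp (-((1 - ε) * u)) * Z)) atTop (𝓝 0) := by
      simpa using ((tendsto_exp_neg_atTop_nhds_zero.comp
        (tendsto_id.const_mul_atTop (sub_pos.2 hε1))).mul_const Z).const_mul K
    exact ge_of_tendsto hlim ((eventually_ge_atTop 0).mono fun u hu => by simpa using h u hu)
  · -- `u = log (Z / Y)` balances the two terms
    obtain ⟨y, rfl⟩ : ∃ y, exp y = Y := ⟨log Y, exp_log hY0⟩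
    obtain ⟨z, rfl⟩ : ∃ z, exp z = Z := ⟨log Z, exp_log hZ0⟩
    have hyz : y ≤ z := exp_le_exp.1 hYZ.le
    calc X ≤ K * (exp (ε * (z - y)) * exp y + exp (-((1 - ε) * (z - y))) * exp z) :=
          h _ (sub_nonneg.2 hyz)
      _ = 2 * K * (exp y ^ (1 - ε) * exp z ^ ε) := by
          simp only [← exp_mul, ← exp_add]
          ring_nf

theorem le_mul_exp_div_mul_rpow_mul_rpow {X Y Z A B a τ ε : ℝ} (hA : 1 ≤ A) (hB : 0 ≤ B)
    (hτ : 0 < τ) (hε0 : 0 < ε) (hε1 : ε < 1) (hY : 0 ≤ Y) (hZ : 0 ≤ Z) (hXZ : X ≤ Z)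
    (h : ∀ Λ, 0 ≤ Λ → X ≤ A * exp (a * Λ) * Y + B * exp (a * Λ - τ * Λ ^ 2) * Z) :
    X ≤ (2 * (A + B) + a ^ 2 / (4 * ε)) * exp ((2 * (A + B) + a ^ 2 / (4 * ε)) / τ) *
      Y ^ (1 - ε) * Z ^ ε := by
  set c := a ^ 2 / (4 * ε) with hc
  have hK : 1 ≤ (A + B) * exp (c / τ) :=
    one_le_mul_of_one_le_of_one_le (by linarith) (one_le_exp (by positivity))
  have key := le_two_mul_mul_rpow_mul_rpow hε0 hε1 hY hZ hK hXZ fun u hu => by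
    obtain ⟨Λ, hΛ, rfl⟩ : ∃ Λ, 0 ≤ Λ ∧ τ * Λ ^ 2 = u :=
      ⟨√(u / τ), sqrt_nonneg _, by rw [sq_sqrt (by positivity)]; field_simp⟩
    -- AM-GM: `a Λ ≤ ε τ Λ² + a² / (4 ε τ)`
    have hamgm : a * Λ ≤ ε * (τ * Λ ^ 2) + c / τ := by
      rw [hc, div_div, ← sub_le_iff_le_add', le_div_iff₀ (by positivity)]
      nlinarith [sq_nonneg (2 * ε * τ * Λ - a)]
    calc X ≤ A * exp (a * Λ) * Y + B * exp (a * Λ - τ * Λ ^ 2) * Z := h Λ hΛ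
      _ ≤ A * exp (ε * (τ * Λ ^ 2) + c / τ) * Y
          + B * exp (ε * (τ * Λ ^ 2) + c / τ - τ * Λ ^ 2) * Z := by gcongr
      _ ≤ (A + B) * exp (c / τ) * (exp (ε * (τ * Λ ^ 2)) * Y
          + exp (-((1 - ε) * (τ * Λ ^ 2))) * Z) := by
        rw [show ε * (τ * Λ ^ 2) + c / τ - τ * Λ ^ 2 = -((1 - ε) * (τ * Λ ^ 2)) + c / τ by ring,
          exp_add, exp_add]
        have hAZ : 0 ≤ A * exp (-((1 - ε) * (τ * Λ ^ 2))) * exp (c / τ) * Z := by positivity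
        have hBY : 0 ≤ B * exp (ε * (τ * Λ ^ 2)) * exp (c / τ) * Y := by positivity
        linear_combination hAZ + hBY
  have hc0 : 0 ≤ c := by positivity
  calc X ≤ 2 * ((A + B) * exp (c / τ)) * (Y ^ (1 - ε) * Z ^ ε) := key
    _ ≤ (2 * (A + B) + c) * exp ((2 * (A + B) + c) / τ) * (Y ^ (1 - ε) * Z ^ ε) := by
        rw [← mul_assoc 2]
        gcongr <;> linarith
    _ = _ := by ring

theorem interpolation_L1_general {M : Type} [MeasurableSpace M] (μ : Measure M)
    [IsFiniteMeasure μ]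
    (e : HilbertBasis ℕ ℝ (Lp ℝ 2 μ)) (lam : ℕ → ℝ)
    (E : Set M)
    (Proj : ℝ → Lp ℝ 2 μ → Lp ℝ 2 μ)
    (hProj : ∀ (Λ : ℝ) (f : Lp ℝ 2 μ),
      HasSum (fun k => (if lam k ≤ Λ then e.repr f k else 0) • e k) (Proj Λ f))
    (S : ℝ → Lp ℝ 2 μ → Lp ℝ 2 μ)
    (hS : ∀ t : ℝ, 0 ≤ t → ∀ f : Lp ℝ 2 μ,
      HasSum (fun k => (Real.exp (-(t * lam k ^ 2)) * e.repr f k) • e k) (S t f))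
    (N : ℝ) (hN : 1 ≤ N)
    (hspec : ∀ Λ : ℝ, 0 ≤ Λ → ∀ f : Lp ℝ 2 μ,
      ‖Proj Λ f‖ ≤ N * Real.exp (N * Λ) * ∫ x in E, |(Proj Λ f : Lp ℝ 2 μ) x| ∂μ)
    (ε : ℝ) (hε0 : 0 < ε) (hε1 : ε < 1) :
    ∃ N' > 0, ∀ s t : ℝ, 0 ≤ s → s < t → ∀ f : Lp ℝ 2 μ,
      ‖S t f‖ ≤ N' * Real.exp (N' / (t - s)) *
        (∫ x in E, |(S t f : Lp ℝ 2 μ) x| ∂μ) ^ (1 - ε) * ‖S s f‖ ^ ε := by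
  set m := μ.real Set.univ ^ (1 / 2 : ℝ)
  refine ⟨2 * (N + (1 + N * m)) + N ^ 2 / (4 * ε), by positivity, fun s t hs hst f => ?_⟩
  have ht : 0 ≤ t := hs.trans hst.le
  refine le_mul_exp_div_mul_rpow_mul_rpow hN (by positivity) (sub_pos.2 hst) hε0 hε1
    (integral_nonneg fun x => abs_nonneg _) (norm_nonneg _)
    (norm_le_norm_of_hasSum_heat e (hS s hs f) (hS t ht f) hst.le) fun Λ hΛ => ?_
  have hexp : 1 ≤ exp (N * Λ) := one_le_exp (by positivity)
  calc ‖S t f‖ ≤ N * exp (N * Λ) * ∫ x in E, |(S t f : Lp ℝ 2 μ) x| ∂μ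
        + (1 + N * exp (N * Λ) * m) * ‖S t f - Proj Λ (S t f)‖ :=
        Lp.norm_le_of_norm_le_setIntegral E (by positivity) (hspec Λ hΛ (S t f))
    _ ≤ N * exp (N * Λ) * ∫ x in E, |(S t f : Lp ℝ 2 μ) x| ∂μ
        + (1 + N * m) * exp (N * Λ) * (exp (-((t - s) * Λ ^ 2)) * ‖S s f‖) := by
        gcongr
        · nlinarith [mul_nonneg (by positivity : 0 ≤ N * m) (sub_nonneg.2 hexp)]
        · exact norm_sub_le_of_hasSum_heat e (hS s hs f) (hS t ht f) hst.le hΛ (hProj Λ _)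
    _ = _ := by rw [exp_sub, exp_neg]; field_simp

/-- if the `L¹` spectral inequality on `E` holds with constant `N ≥ 1`, then
for every `ε ∈ (0,1)` there is `N' > 0` (depending only on `N`, `ε`, `μ(M)`) such that for
all `0 ≤ s < t` and `f ∈ L²(μ)`:
`‖S_t f‖_{L²} ≤ N' e^{N'/(t−s)} (∫_E |S_t f| dμ)^{1−ε} ‖S_s f‖_{L²}^ε`.
Here `Proj_Λ f = Σ_{λ_k ≤ Λ} ⟨f,e_k⟩ e_k` and `S_t f = Σ_k e^{−tλ_k²} ⟨f,e_k⟩ e_k` for an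
orthonormal Hilbert basis `(e_k)` of `L²(μ)` and nonnegative frequencies `(λ_k)`. -/
theorem interpolation_L1 {M : Type} [MeasurableSpace M] (μ : Measure M)
    [IsFiniteMeasure μ]
    (e : HilbertBasis ℕ ℝ (Lp ℝ 2 μ)) (lam : ℕ → ℝ) (hlam : ∀ k, 0 ≤ lam k)
    (E : Set M) (hE : MeasurableSet E)
    (Proj : ℝ → Lp ℝ 2 μ → Lp ℝ 2 μ)
    (hProj : ∀ (Λ : ℝ) (f : Lp ℝ 2 μ),
      HasSum (fun k => (if lam k ≤ Λ then e.repr f k else 0) • e k) (Proj Λ f))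
    (S : ℝ → Lp ℝ 2 μ → Lp ℝ 2 μ)
    (hS : ∀ t : ℝ, 0 ≤ t → ∀ f : Lp ℝ 2 μ,
      HasSum (fun k => (Real.exp (-(t * lam k ^ 2)) * e.repr f k) • e k) (S t f))
    (N : ℝ) (hN : 1 ≤ N)
    (hspec : ∀ Λ : ℝ, 0 ≤ Λ → ∀ f : Lp ℝ 2 μ,
      ‖Proj Λ f‖ ≤ N * Real.exp (N * Λ) * ∫ x in E, |(Proj Λ f : Lp ℝ 2 μ) x| ∂μ)
    (ε : ℝ) (hε0 : 0 < ε) (hε1 : ε < 1) :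
    ∃ N' > 0, ∀ s t : ℝ, 0 ≤ s → s < t → ∀ f : Lp ℝ 2 μ,
      ‖S t f‖ ≤ N' * Real.exp (N' / (t - s)) *
        (∫ x in E, |(S t f : Lp ℝ 2 μ) x| ∂μ) ^ (1 - ε) * ‖S s f‖ ^ ε :=
  interpolation_L1_general μ e lam E Proj hProj S hS N hN hspec ε hε0 hε1
end

section
/- Assume the L^∞ spectral inequality on E holds with constant N ≥ 1 and that the Sobolev hypothesis holds with exponent σ > 0 and constant C_S. Then for every ε ∈ (0,1) there exists N' > 0 (depending only on N, ε, σ, C_S and μ(M)) such that for all 0 ≤ s < t and all f ∈ L²(μ): ‖S_t f‖_{L²(μ)} ≤ N' e^{N'/(t−s)} ( ‖(S_t f)·1_E‖_{L^∞(μ)} )^{1−ε} ‖S_s f‖_{L²(μ)}^{ε}. -/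
/-!
Split `g = S_t f` at frequency `Λ`. The spectral inequality bounds the low-frequency part by
`N e^{NΛ}` times its supremum on `E`, which differs from that of `g` by the supremum of the
high-frequency tail. For `λ ≥ Λ` and `τ = t - s`, heat smoothing gives
`(1 + λ)^σ e^{-τλ²} ≤ e^{σ²/(2τ)} e^{-τΛ²/2}`, so by the Sobolev hypothesis the tail is at most
`C e^{σ²/(2τ)} e^{-τΛ²/2} ‖S_s f‖` in `L^∞` (and without `C` in `L²`). Hence for every `Λ ≥ 0`
`‖g‖ ≤ P (e^{NΛ} ‖1_E g‖_∞ + e^{NΛ - τΛ²/2} ‖S_s f‖)` with `P = N (C + 1) e^{σ²/(2τ)}`,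
and `Λ = ε log (‖S_s f‖ / ‖1_E g‖_∞) / N` turns this into the interpolation inequality.
-/

open MeasureTheory Real Filter

lemma mul_sub_mul_sq_le_sq_div {a : ℝ} (ha : 0 < a) (b x : ℝ) :
    b * x - a * x ^ 2 ≤ b ^ 2 / (4 * a) := by
  rw [le_div_iff₀ (by positivity)]
  nlinarith [sq_nonneg (b - 2 * a * x)]

lemma one_add_rpow_mul_exp_neg_mul_sq_le {σ τ Λ l : ℝ} (hσ : 0 ≤ σ) (hτ : 0 < τ) (hΛ : 0 ≤ Λ)
    (hl : Λ ≤ l) :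
    (1 + l) ^ σ * exp (-(τ * l ^ 2)) ≤ exp (σ ^ 2 / (2 * τ)) * exp (-(τ / 2 * Λ ^ 2)) := by
  have hpoly : (1 + l) ^ σ ≤ exp (σ * l) := by
    rw [mul_comm, exp_mul]
    exact rpow_le_rpow (by linarith) (by linarith [add_one_le_exp l]) hσ
  have hquad := mul_sub_mul_sq_le_sq_div (half_pos hτ) σ l
  have hsq : Λ ^ 2 ≤ l ^ 2 := pow_le_pow_left₀ hΛ hl 2
  calc (1 + l) ^ σ * exp (-(τ * l ^ 2)) ≤ exp (σ * l) * exp (-(τ * l ^ 2)) := by gcongr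
    _ ≤ exp (σ ^ 2 / (2 * τ)) * exp (-(τ / 2 * Λ ^ 2)) := by
      rw [← exp_add, ← exp_add, exp_le_exp]
      have : σ ^ 2 / (4 * (τ / 2)) = σ ^ 2 / (2 * τ) := by ring
      nlinarith

lemma nonpos_of_forall_le_mul_exp_mul_sub {A c N a : ℝ} (ha : 0 < a)
    (h : ∀ Λ, 0 ≤ Λ → A ≤ c * exp (N * Λ - a * Λ ^ 2)) : A ≤ 0 := by
  have hexp : Tendsto (fun Λ => N * Λ - a * Λ ^ 2) atTop atBot := by
    have : Tendsto (fun Λ : ℝ => Λ * (N - a * Λ)) atTop atBot :=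
      tendsto_id.atTop_mul_atBot₀ <| tendsto_atBot_add_const_left _ N <|
        tendsto_neg_atTop_atBot.comp (tendsto_id.const_mul_atTop ha) |>.congr fun _ => by simp
    exact this.congr fun Λ => by ring
  have hlim : Tendsto (fun Λ => c * exp (N * Λ - a * Λ ^ 2)) atTop (nhds 0) := by
    simpa using (tendsto_exp_atBot.comp hexp).const_mul c
  exact ge_of_tendsto hlim ((eventually_ge_atTop 0).mono h)

lemma le_mul_exp_mul_rpow_mul_rpow_of_forall_le {A B D P N a ε : ℝ} (hP : 1 ≤ P) (hN : 0 < N)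
    (ha : 0 < a) (hε0 : 0 < ε) (hε1 : ε < 1) (hD : 0 ≤ D) (hB : 0 ≤ B) (hAB : A ≤ B)
    (h : ∀ Λ, 0 ≤ Λ → A ≤ P * (exp (N * Λ) * D + exp (N * Λ - a * Λ ^ 2) * B)) :
    A ≤ 2 * P * exp (N ^ 2 / (4 * a * ε ^ 2)) * (D ^ (1 - ε) * B ^ ε) := by
  set c := exp (N ^ 2 / (4 * a * ε ^ 2))
  have hc : 1 ≤ c := one_le_exp (by positivity)
  have hT : 0 ≤ D ^ (1 - ε) * B ^ ε := by positivity
  rcases le_or_gt B D with hBD | hDB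
  · calc A ≤ B := hAB
      _ = B ^ (1 - ε) * B ^ ε := by rw [← rpow_add' hB (by norm_num), sub_add_cancel, rpow_one]
      _ ≤ D ^ (1 - ε) * B ^ ε := by gcongr
      _ ≤ 2 * P * c * (D ^ (1 - ε) * B ^ ε) := le_mul_of_one_le_left hT (by nlinarith)
  rcases hD.eq_or_lt with rfl | hD
  · refine (nonpos_of_forall_le_mul_exp_mul_sub ha (c := P * B) (N := N) fun Λ hΛ => ?_).trans
      (mul_nonneg (by nlinarith) hT)
    simpa [mul_comm, mul_left_comm, mul_assoc] using h Λ hΛ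
  -- The cut-off `Λ = ε log (B / D) / N` balances the two terms.
  obtain ⟨u, rfl⟩ : ∃ u, D = exp u := ⟨log D, (exp_log hD).symm⟩
  obtain ⟨v, rfl⟩ : ∃ v, B = exp v := ⟨log B, (exp_log (hD.trans hDB)).symm⟩
  have huv : u < v := exp_lt_exp.1 hDB
  set Λ := ε * (v - u) / N with hΛ
  have hNΛ : N * Λ = ε * (v - u) := by rw [hΛ]; field_simp
  have hlow : exp (N * Λ) * exp u = exp (u * (1 - ε) + v * ε) := by
    rw [← exp_add, hNΛ]; ring_nf
  have hhigh : exp (N * Λ - a * Λ ^ 2) * exp v ≤ c * exp (u * (1 - ε) + v * ε) := by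
    rw [← exp_add, ← exp_add, exp_le_exp]
    have hquad := mul_sub_mul_sq_le_sq_div ha (N / ε) Λ
    have : (N / ε) ^ 2 / (4 * a) = N ^ 2 / (4 * a * ε ^ 2) := by field_simp
    have : N / ε * Λ = v - u := by rw [hΛ]; field_simp
    nlinarith
  rw [← exp_mul, ← exp_mul, ← exp_add]
  calc A ≤ P * (exp (N * Λ) * exp u + exp (N * Λ - a * Λ ^ 2) * exp v) :=
        h Λ (by positivity)
    _ ≤ P * (c * exp (u * (1 - ε) + v * ε) + c * exp (u * (1 - ε) + v * ε)) := by
        rw [hlow]; gcongr; exact le_mul_of_one_le_left (exp_pos _).le hc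
    _ = 2 * P * c * exp (u * (1 - ε) + v * ε) := by ring

lemma mul_exp_mul_add_le {N C w a Λ D B : ℝ} (hN : 1 ≤ N) (hC : 0 ≤ C) (hw : 0 ≤ w) (hΛ : 0 ≤ Λ)
    (hD : 0 ≤ D) (hB : 0 ≤ B) :
    N * exp (N * Λ) * (D + C * (exp w * exp (-(a * Λ ^ 2)) * B)) + exp w * exp (-(a * Λ ^ 2)) * B
      ≤ N * (C + 1) * exp w * (exp (N * Λ) * D + exp (N * Λ - a * Λ ^ 2) * B) := by
  have hx : 1 ≤ exp (N * Λ) := one_le_exp (by positivity)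
  have hz : 1 ≤ exp w := one_le_exp hw
  rw [sub_eq_add_neg, exp_add]
  nlinarith [mul_nonneg (mul_nonneg (mul_nonneg (by linarith : 0 ≤ N) (exp_pos (N * Λ)).le) hD)
      (by nlinarith : 0 ≤ (C + 1) * exp w - 1),
    mul_nonneg (mul_nonneg (mul_nonneg (exp_pos w).le (exp_pos (-(a * Λ ^ 2))).le) hB)
      (by nlinarith : 0 ≤ N * exp (N * Λ) - 1)]

lemma sq_mul_le_sq_mul_sq {ρ u c v : ℝ} (hρ : 0 ≤ ρ) (h : ρ * |u| ≤ c * |v|) :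
    (ρ * u) ^ 2 ≤ c ^ 2 * v ^ 2 := by
  rw [← sq_abs, abs_mul, abs_of_nonneg hρ, ← sq_abs v, ← mul_pow]
  exact pow_le_pow_left₀ (by positivity) h 2

namespace HilbertBasis

variable {ι H : Type*} [NormedAddCommGroup H] [InnerProductSpace ℝ H] (b : HilbertBasis ι ℝ H)

lemma repr_apply_eq_of_hasSum {c : ι → ℝ} {x : H} (h : HasSum (fun i => c i • b i) x) (i : ι) :
    b.repr x i = c i := by
  classical
  have hinner := h.mapL (innerSL ℝ (b i))
  simp only [innerSL_apply_apply, inner_smul_right, orthonormal_iff_ite.1 b.orthonormal,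
    mul_ite, mul_one, mul_zero] at hinner
  simpa [b.repr_apply_apply] using hinner.unique (hasSum_single i fun j hj => if_neg hj.symm)

lemma hasSum_sq_repr (x : H) : HasSum (fun i => b.repr x i ^ 2) (‖x‖ ^ 2) := by
  have hsq : (fun i => b.repr x i ^ 2) = fun i => inner ℝ x (b i) * inner ℝ (b i) x :=
    funext fun i => by rw [real_inner_comm, ← b.repr_apply_apply, sq]
  rw [hsq, ← real_inner_self_eq_norm_sq]
  exact b.hasSum_inner_mul_inner x x

variable {x y : H} {ρ : ι → ℝ} {c : ℝ}

lemma summable_sq_mul_repr (hρ : ∀ i, 0 ≤ ρ i) (h : ∀ i, ρ i * |b.repr x i| ≤ c * |b.repr y i|) :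
    Summable (fun i => (ρ i * b.repr x i) ^ 2) :=
  .of_nonneg_of_le (fun _ => sq_nonneg _) (fun i => sq_mul_le_sq_mul_sq (hρ i) (h i))
    ((b.hasSum_sq_repr y).summable.mul_left (c ^ 2))

lemma tsum_sq_mul_repr_le (hρ : ∀ i, 0 ≤ ρ i) (h : ∀ i, ρ i * |b.repr x i| ≤ c * |b.repr y i|) :
    ∑' i, (ρ i * b.repr x i) ^ 2 ≤ (c * ‖y‖) ^ 2 := by
  calc ∑' i, (ρ i * b.repr x i) ^ 2 ≤ ∑' i, c ^ 2 * b.repr y i ^ 2 :=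
        (b.summable_sq_mul_repr hρ h).tsum_le_tsum (fun i => sq_mul_le_sq_mul_sq (hρ i) (h i))
          ((b.hasSum_sq_repr y).summable.mul_left _)
    _ = (c * ‖y‖) ^ 2 := by rw [tsum_mul_left, (b.hasSum_sq_repr y).tsum_eq, mul_pow]

lemma norm_le_of_abs_repr_le (hc : 0 ≤ c) (h : ∀ i, |b.repr x i| ≤ c * |b.repr y i|) :
    ‖x‖ ≤ c * ‖y‖ := by
  have hsq := b.tsum_sq_mul_repr_le (ρ := 1) (fun _ => zero_le_one) (by simpa using h)
  simp only [Pi.one_apply, one_mul, (b.hasSum_sq_repr x).tsum_eq] at hsq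
  exact (pow_le_pow_iff_left₀ (norm_nonneg x) (by positivity) two_ne_zero).1 hsq

end HilbertBasis

section Lp

variable {M : Type*} [MeasurableSpace M] {μ : Measure M}

lemma toReal_eLpNorm_indicator_sub_le {p : ENNReal} {E : Set M} {u v : Lp ℝ p μ}
    (hu : eLpNorm u ⊤ μ ≠ ⊤) {R : ℝ} (hR : 0 ≤ R) (hv : eLpNorm v ⊤ μ ≤ ENNReal.ofReal R) :
    (eLpNorm (E.indicator ⇑(u - v)) ⊤ μ).toReal ≤ (eLpNorm (E.indicator ⇑u) ⊤ μ).toReal + R := by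
  have hsub : E.indicator ⇑(u - v) =ᵐ[μ] E.indicator ⇑u - E.indicator ⇑v := by
    filter_upwards [Lp.coeFn_sub u v] with x hx
    by_cases hx' : x ∈ E
    · simp only [Pi.sub_apply, Set.indicator_of_mem hx', hx]
    · simp only [Pi.sub_apply, Set.indicator_of_notMem hx', sub_self]
  have hle : eLpNorm (E.indicator ⇑(u - v)) ⊤ μ
      ≤ eLpNorm (E.indicator ⇑u) ⊤ μ + ENNReal.ofReal R := by
    rw [eLpNorm_congr_ae hsub, sub_eq_add_neg, eLpNorm_exponent_top]
    refine eLpNormEssSup_add_le.trans (add_le_add le_rfl ?_)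
    rw [← eLpNorm_exponent_top, eLpNorm_neg]
    exact (eLpNorm_indicator_le _).trans hv
  have hfin : eLpNorm (E.indicator ⇑u) ⊤ μ ≠ ⊤ := ((eLpNorm_indicator_le _).trans_lt hu.lt_top).ne
  simpa [ENNReal.toReal_ofReal hR] using ENNReal.toReal_le_add hle hfin ENNReal.ofReal_ne_top

def SobolevLinftyBound (e : HilbertBasis ℕ ℝ (Lp ℝ 2 μ)) (lam : ℕ → ℝ) (σ C : ℝ) : Prop :=
  ∀ g : Lp ℝ 2 μ, Summable (fun k => (1 + lam k) ^ (2 * σ) * (e.repr g k) ^ 2) →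
    eLpNorm (⇑g) ⊤ μ ≤ ENNReal.ofReal
      (C * (∑' k, (1 + lam k) ^ (2 * σ) * (e.repr g k) ^ 2) ^ ((1 : ℝ) / 2))

variable (e : HilbertBasis ℕ ℝ (Lp ℝ 2 μ)) {lam : ℕ → ℝ} {σ C : ℝ}

lemma SobolevLinftyBound.mono {C' : ℝ} (hlam : ∀ k, 0 ≤ lam k) (h : SobolevLinftyBound e lam σ C)
    (hCC' : C ≤ C') : SobolevLinftyBound e lam σ C' := fun g hg =>
  (h g hg).trans <| ENNReal.ofReal_le_ofReal <| mul_le_mul_of_nonneg_right hCC' <|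
    rpow_nonneg (tsum_nonneg fun k => mul_nonneg (rpow_nonneg (by linarith [hlam k]) _)
      (sq_nonneg _)) _

lemma eLpNorm_top_le_of_rpow_mul_abs_repr_le (hlam : ∀ k, 0 ≤ lam k) (hC : 0 ≤ C)
    (hSob : SobolevLinftyBound e lam σ C) {g h : Lp ℝ 2 μ} {K : ℝ} (hK : 0 ≤ K)
    (hgh : ∀ k, (1 + lam k) ^ σ * |e.repr g k| ≤ K * |e.repr h k|) :
    eLpNorm g ⊤ μ ≤ ENNReal.ofReal (C * (K * ‖h‖)) := by
  have hρ : ∀ k, 0 ≤ (1 + lam k) ^ σ := fun k => rpow_nonneg (by linarith [hlam k]) σ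
  have hweight : ∀ k, (1 + lam k) ^ (2 * σ) * e.repr g k ^ 2 = ((1 + lam k) ^ σ * e.repr g k) ^ 2 :=
    fun k => by rw [mul_pow, mul_comm 2 σ, rpow_mul (by linarith [hlam k]), rpow_two]
  have hsum := e.summable_sq_mul_repr hρ hgh
  have htsum := e.tsum_sq_mul_repr_le hρ hgh
  simp only [← hweight] at hsum htsum
  refine (hSob g hsum).trans (ENNReal.ofReal_le_ofReal (mul_le_mul_of_nonneg_left ?_ hC))
  rw [← sqrt_eq_rpow, ← sqrt_sq (by positivity : 0 ≤ K * ‖h‖)]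
  exact sqrt_le_sqrt htsum

lemma norm_le_of_low_frequency_observability (hlam : ∀ k, 0 ≤ lam k) (hσ : 0 ≤ σ) (hC : 0 ≤ C)
    (hSob : SobolevLinftyBound e lam σ C)
    {E : Set M} {g h P : Lp ℝ 2 μ} {τ Λ Q : ℝ} (hτ : 0 < τ) (hΛ : 0 ≤ Λ) (hQ : 0 ≤ Q)
    (hgh : ∀ k, e.repr g k = exp (-(τ * lam k ^ 2)) * e.repr h k)
    (hP : HasSum (fun k => (if lam k ≤ Λ then e.repr g k else 0) • e k) P)
    (hobs : ‖P‖ ≤ Q * (eLpNorm (E.indicator ⇑P) ⊤ μ).toReal) :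
    ‖g‖ ≤ Q * ((eLpNorm (E.indicator ⇑g) ⊤ μ).toReal
        + C * (exp (σ ^ 2 / (2 * τ)) * exp (-(τ / 2 * Λ ^ 2)) * ‖h‖))
      + exp (σ ^ 2 / (2 * τ)) * exp (-(τ / 2 * Λ ^ 2)) * ‖h‖ := by
  set K := exp (σ ^ 2 / (2 * τ)) * exp (-(τ / 2 * Λ ^ 2))
  have hsmooth : ∀ {Λ'}, 0 ≤ Λ' → ∀ k, Λ' ≤ lam k → (1 + lam k) ^ σ * |e.repr g k|
      ≤ exp (σ ^ 2 / (2 * τ)) * exp (-(τ / 2 * Λ' ^ 2)) * |e.repr h k| := by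
    intro Λ' hΛ' k hk
    rw [hgh, abs_mul, abs_of_pos (exp_pos _), ← mul_assoc]
    exact mul_le_mul_of_nonneg_right (one_add_rpow_mul_exp_neg_mul_sq_le hσ hτ hΛ' hk)
      (abs_nonneg _)
  have htail : ∀ k, (1 + lam k) ^ σ * |e.repr (g - P) k| ≤ K * |e.repr h k| := by
    intro k
    rw [map_sub, lp.coeFn_sub, Pi.sub_apply, e.repr_apply_eq_of_hasSum hP]
    split_ifs with hk
    · simp only [sub_self, abs_zero, mul_zero]; positivity
    · simpa using hsmooth hΛ k (not_le.1 hk).le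
  have hG : ‖g - P‖ ≤ K * ‖h‖ := e.norm_le_of_abs_repr_le (by positivity) fun k =>
    (le_mul_of_one_le_left (abs_nonneg _) (one_le_rpow (by linarith [hlam k]) hσ)).trans (htail k)
  have hGinf := eLpNorm_top_le_of_rpow_mul_abs_repr_le e hlam hC hSob (by positivity) htail
  have hginf : eLpNorm g ⊤ μ ≠ ⊤ := ((eLpNorm_top_le_of_rpow_mul_abs_repr_le e hlam hC hSob
    (by positivity) fun k => hsmooth le_rfl k (hlam k)).trans_lt ENNReal.ofReal_lt_top).ne
  have hPinf := toReal_eLpNorm_indicator_sub_le (E := E) hginf (by positivity) hGinf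
  rw [sub_sub_cancel] at hPinf
  calc ‖g‖ = ‖P + (g - P)‖ := by rw [add_sub_cancel]
    _ ≤ ‖P‖ + ‖g - P‖ := norm_add_le _ _
    _ ≤ _ := add_le_add (hobs.trans (mul_le_mul_of_nonneg_left hPinf hQ)) hG

lemma norm_le_mul_exp_mul_rpow_mul_rpow (hlam : ∀ k, 0 ≤ lam k) (hσ : 0 ≤ σ) (hC : 0 ≤ C)
    (hSob : SobolevLinftyBound e lam σ C)
    {E : Set M} {g h : Lp ℝ 2 μ} {Proj : ℝ → Lp ℝ 2 μ} {τ N ε : ℝ} (hτ : 0 < τ) (hN : 1 ≤ N)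
    (hε0 : 0 < ε) (hε1 : ε < 1)
    (hgh : ∀ k, e.repr g k = exp (-(τ * lam k ^ 2)) * e.repr h k)
    (hProj : ∀ Λ, HasSum (fun k => (if lam k ≤ Λ then e.repr g k else 0) • e k) (Proj Λ))
    (hspec : ∀ Λ, 0 ≤ Λ →
      ‖Proj Λ‖ ≤ N * exp (N * Λ) * (eLpNorm (E.indicator ⇑(Proj Λ)) ⊤ μ).toReal) :
    ‖g‖ ≤ (2 * N * (C + 1) + (σ ^ 2 / 2 + N ^ 2 / (2 * ε ^ 2)))
        * exp ((2 * N * (C + 1) + (σ ^ 2 / 2 + N ^ 2 / (2 * ε ^ 2))) / τ)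
        * ((eLpNorm (E.indicator ⇑g) ⊤ μ).toReal ^ (1 - ε) * ‖h‖ ^ ε) := by
  set D := (eLpNorm (E.indicator ⇑g) ⊤ μ).toReal
  set c := σ ^ 2 / 2 + N ^ 2 / (2 * ε ^ 2) with hc
  set P := N * (C + 1) * exp (σ ^ 2 / (2 * τ))
  have hN0 : 0 < N := by linarith
  have hP : 1 ≤ P := one_le_mul_of_one_le_of_one_le (one_le_mul_of_one_le_of_one_le hN
    (by linarith)) (one_le_exp (by positivity))
  have hcontraction : ‖g‖ ≤ ‖h‖ := by
    simpa using e.norm_le_of_abs_repr_le zero_le_one fun k => by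
      rw [hgh, abs_mul, abs_of_pos (exp_pos _), one_mul]
      exact mul_le_of_le_one_left (abs_nonneg _)
        (exp_le_one_iff.2 (by nlinarith [sq_nonneg (lam k)]))
  have hfamily : ∀ Λ, 0 ≤ Λ → ‖g‖ ≤ P * (exp (N * Λ) * D + exp (N * Λ - τ / 2 * Λ ^ 2) * ‖h‖) :=
    fun Λ hΛ => (norm_le_of_low_frequency_observability e hlam hσ hC hSob hτ hΛ (by positivity)
      hgh (hProj Λ) (hspec Λ hΛ)).trans
        (mul_exp_mul_add_le hN hC (by positivity) hΛ ENNReal.toReal_nonneg (norm_nonneg h))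
  calc ‖g‖ ≤ 2 * P * exp (N ^ 2 / (4 * (τ / 2) * ε ^ 2)) * (D ^ (1 - ε) * ‖h‖ ^ ε) :=
        le_mul_exp_mul_rpow_mul_rpow_of_forall_le hP hN0 (half_pos hτ) hε0 hε1
          ENNReal.toReal_nonneg (norm_nonneg _) hcontraction hfamily
    _ = 2 * N * (C + 1) * exp (c / τ) * (D ^ (1 - ε) * ‖h‖ ^ ε) := by
        rw [show c / τ = σ ^ 2 / (2 * τ) + N ^ 2 / (4 * (τ / 2) * ε ^ 2) by
          rw [hc]; field_simp; ring, exp_add]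
        ring
    _ ≤ (2 * N * (C + 1) + c) * exp ((2 * N * (C + 1) + c) / τ) * (D ^ (1 - ε) * ‖h‖ ^ ε) := by
        have : 0 ≤ c := by positivity
        have : 0 ≤ 2 * N * (C + 1) := by positivity
        gcongr <;> linarith

end Lp

theorem interpolation_Linfty_general {M : Type} [MeasurableSpace M] (μ : Measure M)
    (e : HilbertBasis ℕ ℝ (Lp ℝ 2 μ)) (lam : ℕ → ℝ) (hlam : ∀ k, 0 ≤ lam k)
    (E : Set M)
    (Proj : ℝ → Lp ℝ 2 μ → Lp ℝ 2 μ)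
    (hProj : ∀ (Λ : ℝ) (f : Lp ℝ 2 μ),
      HasSum (fun k => (if lam k ≤ Λ then e.repr f k else 0) • e k) (Proj Λ f))
    (S : ℝ → Lp ℝ 2 μ → Lp ℝ 2 μ)
    (hS : ∀ t : ℝ, 0 ≤ t → ∀ f : Lp ℝ 2 μ,
      HasSum (fun k => (Real.exp (-(t * lam k ^ 2)) * e.repr f k) • e k) (S t f))
    (N : ℝ) (hN : 1 ≤ N)
    (hspec : ∀ Λ : ℝ, 0 ≤ Λ → ∀ f : Lp ℝ 2 μ,
      ‖Proj Λ f‖ ≤ N * Real.exp (N * Λ) *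
        (eLpNorm (E.indicator ⇑(Proj Λ f)) ⊤ μ).toReal)
    (σ C_S : ℝ) (hσ : 0 < σ)
    (hSob : ∀ g : Lp ℝ 2 μ,
      Summable (fun k => (1 + lam k) ^ (2 * σ) * (e.repr g k) ^ 2) →
      eLpNorm (⇑g) ⊤ μ ≤ ENNReal.ofReal
        (C_S * (∑' k, (1 + lam k) ^ (2 * σ) * (e.repr g k) ^ 2) ^ ((1 : ℝ) / 2)))
    (ε : ℝ) (hε0 : 0 < ε) (hε1 : ε < 1) :
    ∃ N' > 0, ∀ s t : ℝ, 0 ≤ s → s < t → ∀ f : Lp ℝ 2 μ,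
      ‖S t f‖ ≤ N' * Real.exp (N' / (t - s)) *
        (eLpNorm (E.indicator ⇑(S t f)) ⊤ μ).toReal ^ (1 - ε) * ‖S s f‖ ^ ε := by
  obtain ⟨C, hC, hSobC⟩ : ∃ C, 0 ≤ C ∧ SobolevLinftyBound e lam σ C :=
    ⟨max C_S 0, le_max_right _ _, SobolevLinftyBound.mono e hlam hSob (le_max_left _ _)⟩
  refine ⟨2 * N * (C + 1) + (σ ^ 2 / 2 + N ^ 2 / (2 * ε ^ 2)), by positivity,
    fun s t hs hst f => ?_⟩
  have hsemigroup : ∀ k, e.repr (S t f) k = exp (-((t - s) * lam k ^ 2)) * e.repr (S s f) k := by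
    intro k
    rw [e.repr_apply_eq_of_hasSum (hS t (by linarith) f), e.repr_apply_eq_of_hasSum (hS s hs f),
      ← mul_assoc, ← exp_add]
    ring_nf
  rw [mul_assoc]
  exact norm_le_mul_exp_mul_rpow_mul_rpow e hlam hσ.le hC hSobC (sub_pos.2 hst) hN hε0 hε1
    hsemigroup (hProj · _) (hspec · · _)

/-- if the `L^∞` spectral inequality on `E` holds with constant `N ≥ 1` and
the Sobolev hypothesis holds with exponent `σ > 0` and constant `C_S`, then for every
`ε ∈ (0,1)` there is `N' > 0` (depending only on `N, ε, σ, C_S, μ(M)`) such that for all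
`0 ≤ s < t` and `f ∈ L²(μ)`:
`‖S_t f‖_{L²} ≤ N' e^{N'/(t−s)} ‖(S_t f)·1_E‖_{L^∞}^{1−ε} ‖S_s f‖_{L²}^ε`. -/
theorem interpolation_Linfty {M : Type} [MeasurableSpace M] (μ : Measure M)
    [IsFiniteMeasure μ]
    (e : HilbertBasis ℕ ℝ (Lp ℝ 2 μ)) (lam : ℕ → ℝ) (hlam : ∀ k, 0 ≤ lam k)
    (E : Set M) (hE : MeasurableSet E)
    (Proj : ℝ → Lp ℝ 2 μ → Lp ℝ 2 μ)
    (hProj : ∀ (Λ : ℝ) (f : Lp ℝ 2 μ),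
      HasSum (fun k => (if lam k ≤ Λ then e.repr f k else 0) • e k) (Proj Λ f))
    (S : ℝ → Lp ℝ 2 μ → Lp ℝ 2 μ)
    (hS : ∀ t : ℝ, 0 ≤ t → ∀ f : Lp ℝ 2 μ,
      HasSum (fun k => (Real.exp (-(t * lam k ^ 2)) * e.repr f k) • e k) (S t f))
    (N : ℝ) (hN : 1 ≤ N)
    (hspec : ∀ Λ : ℝ, 0 ≤ Λ → ∀ f : Lp ℝ 2 μ,
      ‖Proj Λ f‖ ≤ N * Real.exp (N * Λ) *
        (eLpNorm (E.indicator ⇑(Proj Λ f)) ⊤ μ).toReal)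
    (σ C_S : ℝ) (hσ : 0 < σ)
    (hSob : ∀ g : Lp ℝ 2 μ,
      Summable (fun k => (1 + lam k) ^ (2 * σ) * (e.repr g k) ^ 2) →
      eLpNorm (⇑g) ⊤ μ ≤ ENNReal.ofReal
        (C_S * (∑' k, (1 + lam k) ^ (2 * σ) * (e.repr g k) ^ 2) ^ ((1 : ℝ) / 2)))
    (ε : ℝ) (hε0 : 0 < ε) (hε1 : ε < 1) :
    ∃ N' > 0, ∀ s t : ℝ, 0 ≤ s → s < t → ∀ f : Lp ℝ 2 μ,
      ‖S t f‖ ≤ N' * Real.exp (N' / (t - s)) *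
        (eLpNorm (E.indicator ⇑(S t f)) ⊤ μ).toReal ^ (1 - ε) * ‖S s f‖ ^ ε :=
  interpolation_Linfty_general μ e lam hlam E Proj hProj S hS N hN hspec σ C_S hσ hSob ε hε0 hε1
end

section
/- Let N ≥ 1, B ≥ 1, D ≥ 1 and ε ∈ (0, 1/(2D)). Then there exist constants A > 0 and C > 0, depending only on N, B, D, ε, such that for every τ > 0 and all nonnegative reals X, Y, Z satisfying X ≤ N e^{N/τ} Y^{1−ε} Z^{ε}, one has e^{−A/τ} X − e^{−DA/τ} Z ≤ C e^{−B/τ} Y. -/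
/-! Choose `A` so that `A (1 - ε D) = N + B (1 - ε)`. Then the weight `e^{-A/τ} e^{N/τ}` splits
exactly as `(e^{-B/τ})^{1-ε} (e^{-DA/τ})^ε`, and weighted AM–GM (Young's inequality), with the
constant `N` pushed entirely onto the `Y`-term, bounds `e^{-A/τ} X` by
`C e^{-B/τ} Y + e^{-DA/τ} Z`. -/

open Real

theorem mul_rpow_one_sub_mul_rpow_le_add {ε c a b : ℝ} (hε0 : 0 < ε) (hε1 : ε < 1)
    (hc : 0 ≤ c) (ha : 0 ≤ a) (hb : 0 ≤ b) :
    c * a ^ (1 - ε) * b ^ ε ≤ (1 - ε) * (c * ε ^ ε) ^ (1 - ε)⁻¹ * a + b := by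
  set K := (c * ε ^ ε) ^ (1 - ε)⁻¹
  have hcε : 0 ≤ c * ε ^ ε := by positivity
  have hK : K ^ (1 - ε) = c * ε ^ ε := rpow_inv_rpow hcε (by linarith)
  have hεε : ε ^ ε * (b / ε) ^ ε = b ^ ε := by
    rw [← mul_rpow hε0.le (by positivity), mul_div_cancel₀ b hε0.ne']
  calc c * a ^ (1 - ε) * b ^ ε = (K * a) ^ (1 - ε) * (b / ε) ^ ε := by
        rw [mul_rpow (by positivity) ha, hK, ← hεε]; ring
    _ ≤ (1 - ε) * (K * a) + ε * (b / ε) :=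
        geom_mean_le_arith_mean2_weighted (by linarith) hε0.le (by positivity) (by positivity)
          (by ring)
    _ = (1 - ε) * K * a + b := by field_simp

theorem exp_neg_div_mul_exp_div_eq {N B D ε A τ : ℝ} (hA : A * (1 - ε * D) = N + B * (1 - ε)) :
    exp (-A / τ) * exp (N / τ) = exp (-B / τ) ^ (1 - ε) * exp (-(D * A) / τ) ^ ε := by
  rw [← exp_mul, ← exp_mul, ← exp_add, ← exp_add]
  congr 1
  linear_combination (-1 / τ) * hA

/-- the elementary real inequality converting an interpolation inequality
with exponentially growing constant into a difference inequality with exponentially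
small weights. -/
theorem young_trick (N B D ε : ℝ) (hN : 1 ≤ N) (hB : 1 ≤ B) (hD : 1 ≤ D)
    (hε0 : 0 < ε) (hε : ε < 1 / (2 * D)) :
    ∃ A > 0, ∃ C > 0, ∀ τ > 0, ∀ X Y Z : ℝ, 0 ≤ X → 0 ≤ Y → 0 ≤ Z →
      X ≤ N * Real.exp (N / τ) * Y ^ (1 - ε) * Z ^ ε →
      Real.exp (-A / τ) * X - Real.exp (-(D * A) / τ) * Z ≤ C * Real.exp (-B / τ) * Y := by
  have hεD : ε * D < 1 / 2 := by
    rw [lt_div_iff₀ (by positivity)] at hε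
    linarith
  have hε1 : ε < 1 := by nlinarith
  set A := (N + B * (1 - ε)) / (1 - ε * D)
  have hA : A * (1 - ε * D) = N + B * (1 - ε) := div_mul_cancel₀ _ (by linarith)
  refine ⟨A, div_pos (by nlinarith) (by linarith), (1 - ε) * (N * ε ^ ε) ^ (1 - ε)⁻¹,
    mul_pos (by linarith) (by positivity), fun τ _ X Y Z _ hY hZ hXYZ => ?_⟩
  have hX : exp (-A / τ) * X ≤ (1 - ε) * (N * ε ^ ε) ^ (1 - ε)⁻¹ * (exp (-B / τ) * Y)
      + exp (-(D * A) / τ) * Z :=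
    calc exp (-A / τ) * X ≤ exp (-A / τ) * (N * exp (N / τ) * Y ^ (1 - ε) * Z ^ ε) := by gcongr
      _ = N * (exp (-B / τ) * Y) ^ (1 - ε) * (exp (-(D * A) / τ) * Z) ^ ε := by
          rw [mul_rpow (exp_pos _).le hY, mul_rpow (exp_pos _).le hZ]
          linear_combination N * Y ^ (1 - ε) * Z ^ ε * exp_neg_div_mul_exp_div_eq (τ := τ) hA
      _ ≤ _ := mul_rpow_one_sub_mul_rpow_le_add hε0 hε1 (by linarith)
          (mul_nonneg (exp_pos _).le hY) (mul_nonneg (exp_pos _).le hZ)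
  linarith
end

section
/- Let T > 0 and let J ⊆ (0,T) be a Lebesgue measurable set with |J| > 0. Let l ∈ (0,T) be a point of Lebesgue density 1 of J. Then for every z > 1 there exists l₁ ∈ (l, T) such that the sequence (l_m)_{m≥1} defined by l_{m+1} − l = z^{−m}(l₁ − l) (i.e. l_m = l + z^{−(m−1)}(l₁ − l)) satisfies |J ∩ (l_{m+1}, l_m)| ≥ (l_m − l_{m+1})/3 for every m ≥ 1. -/
open MeasureTheory Filter

/-- Phung–Wang density point lemma: if `l ∈ (0,T)` is a point of Lebesgue
density 1 of a measurable `J ⊆ (0,T)` of positive measure, then for every `z > 1` there is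
`l₁ ∈ (l,T)` such that the sequence `l_m = l + z^{−(m−1)}(l₁−l)` satisfies
`|J ∩ (l_{m+1}, l_m)| ≥ (l_m − l_{m+1})/3` for every `m ≥ 1`. -/
theorem density_point_sequence (T : ℝ) (hT : 0 < T) (J : Set ℝ) (hJm : MeasurableSet J)
    (hJsub : J ⊆ Set.Ioo 0 T) (hJpos : 0 < volume J)
    (l : ℝ) (hl : l ∈ Set.Ioo 0 T)
    (hdens : Tendsto (fun r : ℝ => (volume (J ∩ Set.Ioo (l - r) (l + r))).toReal / (2 * r))
      (nhdsWithin 0 (Set.Ioi 0)) (nhds 1)) :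
    ∀ z : ℝ, 1 < z → ∃ l₁ ∈ Set.Ioo l T, ∀ m : ℕ, 1 ≤ m →
      ENNReal.ofReal
          (((l + z ^ (1 - (m : ℤ)) * (l₁ - l)) - (l + z ^ (-(m : ℤ)) * (l₁ - l))) / 3) ≤
        volume (J ∩ Set.Ioo (l + z ^ (-(m : ℤ)) * (l₁ - l))
          (l + z ^ (1 - (m : ℤ)) * (l₁ - l))) := by
  intro z hz
  have hz0 : (0:ℝ) < z := lt_trans one_pos hz
  set ε : ℝ := (1 - 1/z) / 3 with hε
  have hεpos : 0 < ε := by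
    have : 1/z < 1 := by
      rw [div_lt_one hz0]; exact hz
    have : 0 < 1 - 1/z := by linarith
    positivity
  have hev : ∀ᶠ r in nhdsWithin (0:ℝ) (Set.Ioi 0),
      1 - ε ≤ (volume (J ∩ Set.Ioo (l - r) (l + r))).toReal / (2 * r) :=
    hdens.eventually (eventually_ge_nhds (by linarith))
  obtain ⟨δ, hδmem, hδ⟩ := mem_nhdsGT_iff_exists_Ioo_subset.mp hev
  have hδpos : (0:ℝ) < δ := hδmem
  set d : ℝ := min (δ/2) ((T - l)/2) with hd
  have hTl : 0 < T - l := by linarith [hl.2]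
  have hdpos : 0 < d := lt_min (by linarith) (by linarith)
  refine ⟨l + d, ⟨by linarith, by
    have : d ≤ (T - l)/2 := min_le_right _ _
    linarith⟩, ?_⟩
  intro m hm
  have hsimp : l + d - l = d := by ring
  rw [hsimp]
  set p : ℝ := z ^ (-(m:ℤ)) with hp
  set q : ℝ := z ^ (1 - (m:ℤ)) with hq
  have hppos : 0 < p := zpow_pos hz0 _
  have hqp : q = z * p := by
    rw [hp, hq]
    rw [show (1 - (m:ℤ)) = -(m:ℤ) + 1 by ring, zpow_add_one₀ (ne_of_gt hz0)]
    ring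
  have hq1 : q ≤ 1 := by
    rw [hq]
    exact zpow_le_one_of_nonpos₀ (le_of_lt hz) (by omega)
  set r : ℝ := q * d with hr
  have hqpos : 0 < q := by rw [hqp]; positivity
  have hrpos : 0 < r := mul_pos hqpos hdpos
  have hrδ : r < δ := by
    have h1 : r ≤ d := by
      calc r = q * d := hr
        _ ≤ 1 * d := by nlinarith
        _ = d := one_mul d
    have : d ≤ δ/2 := min_le_left _ _
    linarith
  have hratio := hδ ⟨hrpos, hrδ⟩
  -- interval endpoints
  set a : ℝ := l + p * d with ha
  set b : ℝ := l + q * d with hb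
  have hab : a < b := by
    have : p < q := by rw [hqp]; nlinarith
    have : p * d < q * d := by nlinarith
    simp [ha, hb]; linarith
  have hbig : Set.Ioo a b ⊆ Set.Ioo (l - r) (l + r) := by
    apply Set.Ioo_subset_Ioo
    · have : 0 < p * d := by positivity
      simp [ha]; linarith
    · simp [hb, hr]
  have hJab_fin : volume (J ∩ Set.Ioo a b) ≠ ⊤ :=
    ne_top_of_le_ne_top (by simp [Real.volume_Ioo]) (measure_mono Set.inter_subset_right)
  have hJbig_fin : volume (J ∩ Set.Ioo (l - r) (l + r)) ≠ ⊤ :=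
    ne_top_of_le_ne_top (by simp [Real.volume_Ioo]) (measure_mono Set.inter_subset_right)
  -- decomposition
  have hdecomp : volume (J ∩ Set.Ioo (l - r) (l + r)) ≤
      volume (J ∩ Set.Ioo a b) + volume (Set.Ioo (l - r) (l + r) \ Set.Ioo a b) := by
    refine le_trans (measure_mono ?_) (measure_union_le _ _)
    intro x hx
    by_cases hxab : x ∈ Set.Ioo a b
    · exact Or.inl ⟨hx.1, hxab⟩
    · exact Or.inr ⟨hx.2, hxab⟩
  have hdiff : volume (Set.Ioo (l - r) (l + r) \ Set.Ioo a b)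
      = ENNReal.ofReal (2*r) - ENNReal.ofReal (b - a) := by
    rw [measure_diff hbig measurableSet_Ioo.nullMeasurableSet
      (by simp [Real.volume_Ioo])]
    rw [Real.volume_Ioo, Real.volume_Ioo]
    congr 1
    ring_nf
  have hba2r : b - a ≤ 2 * r := by
    have h1 : b - a = (q - p) * d := by simp [ha, hb]; ring
    have : 0 < p * d := by positivity
    rw [h1, hr]; nlinarith
  have hdiff_toReal : (volume (Set.Ioo (l - r) (l + r) \ Set.Ioo a b)).toReal
      = 2*r - (b - a) := by
    rw [hdiff, ENNReal.toReal_sub_of_le (ENNReal.ofReal_le_ofReal hba2r) ENNReal.ofReal_ne_top,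
      ENNReal.toReal_ofReal (by linarith), ENNReal.toReal_ofReal (by linarith)]
  set A : ℝ := (volume (J ∩ Set.Ioo (l - r) (l + r))).toReal with hA
  set B : ℝ := (volume (J ∩ Set.Ioo a b)).toReal with hB
  have hAB : A ≤ B + (2*r - (b - a)) := by
    have := ENNReal.toReal_mono
      (by
        refine ENNReal.add_ne_top.mpr ⟨hJab_fin, ?_⟩
        rw [hdiff]; exact tsub_le_self.trans_lt ENNReal.ofReal_lt_top |>.ne)
      hdecomp
    rwa [ENNReal.toReal_add hJab_fin (by
        rw [hdiff]; exact (tsub_le_self.trans_lt ENNReal.ofReal_lt_top).ne),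
      hdiff_toReal] at this
  have hAlow : (1 - ε) * (2 * r) ≤ A := by
    have h2r : 0 < 2 * r := by linarith
    calc (1 - ε) * (2 * r) ≤ (A / (2 * r)) * (2 * r) := by
          apply mul_le_mul_of_nonneg_right hratio (le_of_lt h2r)
      _ = A := by field_simp
  -- arithmetic
  have hbaval : b - a = (z - 1) * p * d := by
    simp only [ha, hb, hqp]; ring
  have hrval : r = z * p * d := by rw [hr, hqp]
  have hgoal : (b - a) / 3 ≤ B := by
    have hεval : ε * (2 * r) = 2 * (z - 1) * p * d / 3 := by
      rw [hε, hrval]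
      field_simp
    nlinarith [hAB, hAlow]
  exact ENNReal.ofReal_le_of_le_toReal hgoal
end
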